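/- Let ζ ∈ E satisfy (α, ζ) > 0 for every positive root α ∈ Φ⁺. Let ν ∈ E be such that ν+ρ is regular, let w ∈ W be the unique element such that w(ν+ρ) is dominant, let α, β ∈ Φ⁺ be orthogonal positive roots ((α,β) = 0) with ⟨ν+ρ, α∨⟩ = ⟨ν+ρ, β∨⟩, and let γ ∈ E and c be a positive integer with c·γ = α + β. Then (w(γ), ζ) > 0 if and only if (ν+ρ, γ) > 0. -/

import Mathlib

/-!
Weyl group elements are isometries permuting `Φ`. Since `w (ν + ρ)` is dominant and regular,
a root `w δ` is positive exactly when `(w (ν + ρ), w δ) = (ν + ρ, δ)` is positive, so the sign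
of `(w δ, ζ)` is the sign of `(ν + ρ, δ)`. The equal coroot pairings give `(ν + ρ, α)` and
`(ν + ρ, β)` the same sign, and `γ` is a positive multiple of `α + β`, so both sides of the
equivalence have the sign of `(ν + ρ, α)`.
-/

open scoped RealInnerProductSpace

/-- The reflection `s_α(x) = x - ⟨x, α∨⟩ α` attached to a root `α`, where
`⟨x, α∨⟩ = 2(x,α)/(α,α)`. -/
noncomputable def sRefl {E : Type*} [NormedAddCommGroup E] [InnerProductSpace ℝ E]
    (α x : E) : E :=
  x - (2 * ⟪x, α⟫ / ⟪α, α⟫) • α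

/-- The Weyl group of `Φ`, as the subgroup of linear automorphisms of `E` generated by
the reflections `s_α`, `α ∈ Φ`. -/
def weylGroup {E : Type*} [NormedAddCommGroup E] [InnerProductSpace ℝ E]
    (Φ : Finset E) : Subgroup (E ≃ₗ[ℝ] E) :=
  Subgroup.closure {g : E ≃ₗ[ℝ] E | ∃ α ∈ Φ, ∀ x, g x = sRefl α x}

open SignType

theorem sign_add_eq_of_sign_eq {α : Type*} [AddCommGroup α] [LinearOrder α]
    [IsOrderedAddMonoid α] {a b : α} (h : sign a = sign b) : sign (a + b) = sign a := by
  rcases lt_trichotomy a 0 with ha | rfl | ha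
  · rw [sign_neg ha] at h ⊢
    exact sign_neg (add_neg ha (sign_eq_neg_one_iff.1 h.symm))
  · rw [sign_zero, eq_comm, sign_eq_zero_iff] at h
    simp [h]
  · rw [sign_pos ha] at h ⊢
    exact sign_pos (add_pos ha (sign_eq_one_iff.1 h.symm))

section

variable {E : Type*} [NormedAddCommGroup E] [InnerProductSpace ℝ E]

theorem sRefl_sRefl (α x : E) : sRefl α (sRefl α x) = x := by
  rcases eq_or_ne α 0 with rfl | hα
  · simp [sRefl]
  have hαα : ⟪α, α⟫ ≠ 0 := inner_self_ne_zero.2 hα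
  unfold sRefl
  rw [inner_sub_left, real_inner_smul_left,
    show 2 * (⟪x, α⟫ - 2 * ⟪x, α⟫ / ⟪α, α⟫ * ⟪α, α⟫) / ⟪α, α⟫ = -(2 * ⟪x, α⟫ / ⟪α, α⟫) by
      field_simp; ring]
  module

theorem inner_sRefl_sRefl (α x y : E) : ⟪sRefl α x, sRefl α y⟫ = ⟪x, y⟫ := by
  rcases eq_or_ne α 0 with rfl | hα
  · simp [sRefl]
  have hαα : ⟪α, α⟫ ≠ 0 := inner_self_ne_zero.2 hα
  simp only [sRefl, inner_sub_left, inner_sub_right, real_inner_smul_left, real_inner_smul_right,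
    real_inner_comm y α]
  field_simp
  ring

theorem sign_coroot_pairing (x α : E) : sign (2 * ⟪x, α⟫ / ⟪α, α⟫) = sign ⟪x, α⟫ := by
  rcases eq_or_ne α 0 with rfl | hα
  · simp
  rw [div_eq_mul_inv, sign_mul, sign_mul, sign_pos two_pos,
    sign_pos (inv_pos.2 (real_inner_self_pos.2 hα)), one_mul, mul_one]

variable {Φ Φpos : Finset E} {g : E ≃ₗ[ℝ] E}

theorem inv_eq_self_of_forall_apply_eq_sRefl {α : E} (hg : ∀ x, g x = sRefl α x) : g⁻¹ = g :=
  inv_eq_of_mul_eq_one_right <| LinearEquiv.ext fun x => by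
    rw [LinearEquiv.mul_apply, hg, hg, sRefl_sRefl]; rfl

theorem inner_map_map_of_mem_weylGroup (hg : g ∈ weylGroup Φ) (x y : E) :
    ⟪g x, g y⟫ = ⟪x, y⟫ := by
  induction hg using Subgroup.closure_induction'' generalizing x y with
  | mem g hg =>
    obtain ⟨α, -, hg⟩ := hg
    rw [hg, hg, inner_sRefl_sRefl]
  | inv_mem g hg =>
    obtain ⟨α, -, hg⟩ := hg
    rw [inv_eq_self_of_forall_apply_eq_sRefl hg, hg, hg, inner_sRefl_sRefl]
  | one => rfl
  | mul g h _ _ hg hh => rw [LinearEquiv.mul_apply, LinearEquiv.mul_apply, hg, hh]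

theorem map_mem_of_mem_weylGroup (hΦ : ∀ α ∈ Φ, ∀ β ∈ Φ, sRefl α β ∈ Φ) (hg : g ∈ weylGroup Φ)
    {δ : E} (hδ : δ ∈ Φ) : g δ ∈ Φ := by
  induction hg using Subgroup.closure_induction'' generalizing δ with
  | mem g hg =>
    obtain ⟨α, hα, hg⟩ := hg
    exact hg δ ▸ hΦ α hα δ hδ
  | inv_mem g hg =>
    obtain ⟨α, hα, hg⟩ := hg
    rw [inv_eq_self_of_forall_apply_eq_sRefl hg]
    exact hg δ ▸ hΦ α hα δ hδ
  | one => exact hδ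
  | mul g h _ _ hg hh => exact hg (hh hδ)

variable {μ ζ δ : E}

theorem mem_pos_of_inner_pos (hpos : ∀ α ∈ Φ, (α ∈ Φpos ↔ -α ∉ Φpos))
    (hμ : ∀ α ∈ Φpos, 0 ≤ ⟪μ, α⟫) (hδ : δ ∈ Φ) (hμδ : 0 < ⟪μ, δ⟫) : δ ∈ Φpos :=
  (hpos δ hδ).2 fun h => by
    have := hμ _ h
    rw [inner_neg_right] at this
    linarith

theorem neg_mem_pos_of_inner_neg (hpos : ∀ α ∈ Φ, (α ∈ Φpos ↔ -α ∉ Φpos))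
    (hμ : ∀ α ∈ Φpos, 0 ≤ ⟪μ, α⟫) (hδ : δ ∈ Φ) (hμδ : ⟪μ, δ⟫ < 0) : -δ ∈ Φpos :=
  not_not.1 fun h => hμδ.not_ge (hμ δ ((hpos δ hδ).2 h))

theorem sign_inner_eq_sign_inner_of_dominant (hpos : ∀ α ∈ Φ, (α ∈ Φpos ↔ -α ∉ Φpos))
    (hζ : ∀ α ∈ Φpos, 0 < ⟪α, ζ⟫) (hμ : ∀ α ∈ Φpos, 0 ≤ ⟪μ, α⟫) (hδ : δ ∈ Φ)
    (hμδ : ⟪μ, δ⟫ ≠ 0) : sign ⟪δ, ζ⟫ = sign ⟪μ, δ⟫ := by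
  rcases hμδ.lt_or_gt with hneg | hpos'
  · have := hζ _ (neg_mem_pos_of_inner_neg hpos hμ hδ hneg)
    rw [inner_neg_left, neg_pos] at this
    rw [sign_neg this, sign_neg hneg]
  · rw [sign_pos (hζ _ (mem_pos_of_inner_pos hpos hμ hδ hpos')), sign_pos hpos']

end

theorem weyl_apply_inner_pos_iff_general
    {E : Type*} [NormedAddCommGroup E] [InnerProductSpace ℝ E]
    (Φ Φpos : Finset E)
    -- `Φ` is a finite reduced root system:
    (hΦrefl : ∀ α ∈ Φ, ∀ β ∈ Φ, sRefl α β ∈ Φ)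
    -- `Φpos` is a system of positive roots:
    (hposΦ : Φpos ⊆ Φ)
    (hpos : ∀ α ∈ Φ, (α ∈ Φpos ↔ -α ∉ Φpos))
    (ρ : E)
    -- `ζ` pairs positively with every positive root:
    (ζ : E) (hζ : ∀ α ∈ Φpos, 0 < ⟪α, ζ⟫)
    -- `ν+ρ` is regular:
    (ν : E) (hreg : ∀ α ∈ Φ, ⟪ν + ρ, α⟫ ≠ 0)
    -- `w` is the (unique) Weyl group element such that `w(ν+ρ)` is dominant:
    (w : E ≃ₗ[ℝ] E) (hwW : w ∈ weylGroup Φ)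
    (hwdom : ∀ α ∈ Φpos, 0 ≤ ⟪w (ν + ρ), α⟫)
    -- `α, β` are orthogonal positive roots with `⟨ν+ρ, α∨⟩ = ⟨ν+ρ, β∨⟩`:
    (α β : E) (hα : α ∈ Φpos) (hβ : β ∈ Φpos)
    (hpair : 2 * ⟪ν + ρ, α⟫ / ⟪α, α⟫ = 2 * ⟪ν + ρ, β⟫ / ⟪β, β⟫)
    -- `γ` satisfies `c·γ = α + β` for a positive integer `c`:
    (γ : E) (c : ℕ) (hc : 0 < c) (hγ : (c : ℝ) • γ = α + β) :
    0 < ⟪w γ, ζ⟫ ↔ 0 < ⟪ν + ρ, γ⟫ := by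
  have sign_apply {δ : E} (hδ : δ ∈ Φpos) : sign ⟪w δ, ζ⟫ = sign ⟪ν + ρ, δ⟫ := by
    rw [← inner_map_map_of_mem_weylGroup hwW (ν + ρ) δ]
    refine sign_inner_eq_sign_inner_of_dominant hpos hζ hwdom
      (map_mem_of_mem_weylGroup hΦrefl hwW (hposΦ hδ)) ?_
    rw [inner_map_map_of_mem_weylGroup hwW]
    exact hreg δ (hposΦ hδ)
  have sign_α_eq_sign_β : sign ⟪ν + ρ, α⟫ = sign ⟪ν + ρ, β⟫ := by
    rw [← sign_coroot_pairing, hpair, sign_coroot_pairing]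
  have sign_c_mul (x : ℝ) : sign ((c : ℝ) * x) = sign x := by
    rw [sign_mul, sign_pos (Nat.cast_pos.2 hc), one_mul]
  have key : sign ⟪w γ, ζ⟫ = sign ⟪ν + ρ, γ⟫ :=
    calc sign ⟪w γ, ζ⟫ = sign (⟪w α, ζ⟫ + ⟪w β, ζ⟫) := by
          rw [← inner_add_left, ← map_add, ← hγ, map_smul, real_inner_smul_left, sign_c_mul]
      _ = sign ⟪ν + ρ, α⟫ := by
          rw [sign_add_eq_of_sign_eq (by rw [sign_apply hα, sign_apply hβ, sign_α_eq_sign_β]),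
            sign_apply hα]
      _ = sign ⟪ν + ρ, γ⟫ := by
          rw [← sign_add_eq_of_sign_eq sign_α_eq_sign_β, ← inner_add_right, ← hγ,
            real_inner_smul_right, sign_c_mul]
  rw [← sign_eq_one_iff, key, sign_eq_one_iff]

/-- Let `ζ` pair positively with every positive root, let `ν+ρ` be regular, let `w` be
the Weyl group element making `w(ν+ρ)` dominant, let `α, β` be orthogonal positive
roots with `⟨ν+ρ, α∨⟩ = ⟨ν+ρ, β∨⟩` and let `γ` satisfy `c·γ = α + β` for a positive
integer `c`.  Then `(w(γ), ζ) > 0` if and only if `(ν+ρ, γ) > 0`. -/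
theorem weyl_apply_inner_pos_iff
    {E : Type*} [NormedAddCommGroup E] [InnerProductSpace ℝ E] [FiniteDimensional ℝ E]
    (Φ Φpos : Finset E)
    -- `Φ` is a finite reduced root system:
    (hΦ0 : (0 : E) ∉ Φ)
    (hΦneg : ∀ α ∈ Φ, -α ∈ Φ)
    (hΦrefl : ∀ α ∈ Φ, ∀ β ∈ Φ, sRefl α β ∈ Φ)
    (hΦred : ∀ α ∈ Φ, ∀ t : ℝ, t • α ∈ Φ → t = 1 ∨ t = -1)
    (hΦint : ∀ α ∈ Φ, ∀ β ∈ Φ, ∃ n : ℤ, 2 * ⟪β, α⟫ / ⟪α, α⟫ = (n : ℝ))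
    -- `Φpos` is a system of positive roots:
    (hposΦ : Φpos ⊆ Φ)
    (hpos : ∀ α ∈ Φ, (α ∈ Φpos ↔ -α ∉ Φpos))
    (hposadd : ∀ α ∈ Φpos, ∀ β ∈ Φpos, α + β ∈ Φ → α + β ∈ Φpos)
    -- `ρ` is the half-sum of the positive roots:
    (ρ : E) (hρ : ρ = (2 : ℝ)⁻¹ • ∑ α ∈ Φpos, α)
    -- `ζ` pairs positively with every positive root:
    (ζ : E) (hζ : ∀ α ∈ Φpos, 0 < ⟪α, ζ⟫)
    -- `ν+ρ` is regular:
    (ν : E) (hreg : ∀ α ∈ Φ, ⟪ν + ρ, α⟫ ≠ 0)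
    -- `w` is the (unique) Weyl group element such that `w(ν+ρ)` is dominant:
    (w : E ≃ₗ[ℝ] E) (hwW : w ∈ weylGroup Φ)
    (hwdom : ∀ α ∈ Φpos, 0 ≤ ⟪w (ν + ρ), α⟫)
    -- `α, β` are orthogonal positive roots with `⟨ν+ρ, α∨⟩ = ⟨ν+ρ, β∨⟩`:
    (α β : E) (hα : α ∈ Φpos) (hβ : β ∈ Φpos) (horth : ⟪α, β⟫ = 0)
    (hpair : 2 * ⟪ν + ρ, α⟫ / ⟪α, α⟫ = 2 * ⟪ν + ρ, β⟫ / ⟪β, β⟫)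
    -- `γ` satisfies `c·γ = α + β` for a positive integer `c`:
    (γ : E) (c : ℕ) (hc : 0 < c) (hγ : (c : ℝ) • γ = α + β) :
    0 < ⟪w γ, ζ⟫ ↔ 0 < ⟪ν + ρ, γ⟫ :=
  weyl_apply_inner_pos_iff_general Φ Φpos hΦrefl hposΦ hpos ρ ζ hζ ν hreg w hwW hwdom α β hα hβ
    hpair γ c hc hγ
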